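/- Let G be a graph, c ∈ ℕ, and let G^c be the c-chordal completion of G, obtained by adding an edge between every pair of distinct vertices lying in a common maximal c-inseparable set of G. Then for every A ⊆ V(G): G[A] is a maximal c-atom of G if and only if G^c[A] is a maximal c-atom of G^c. -/

import Mathlib

variable {V : Type*}

/-- `C` separates `x` and `y` in `G`: neither endpoint is in `C` and every walk
from `x` to `y` meets `C`. -/
def Separates (G : SimpleGraph V) (C : Set V) (x y : V) : Prop :=
  x ∉ C ∧ y ∉ C ∧ ∀ p : G.Walk x y, ∃ z ∈ C, z ∈ p.support

/-- `x` and `y` are `c`-inseparable in `G`: no clique of size at most `c` separates them. -/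
def CInsep (G : SimpleGraph V) (c : ℕ) (x y : V) : Prop :=
  ∀ C : Set V, G.IsClique C → C.ncard ≤ c → ¬ Separates G C x y

/-- A set is `c`-inseparable if all its pairs of vertices are. -/
def InsepSet (G : SimpleGraph V) (c : ℕ) (A : Set V) : Prop :=
  ∀ x ∈ A, ∀ y ∈ A, CInsep G c x y

/-- Maximal `c`-inseparable set. -/
def MaxInsepSet (G : SimpleGraph V) (c : ℕ) (A : Set V) : Prop :=
  InsepSet G c A ∧ ∀ B, A ⊆ B → InsepSet G c B → B = A

/-- `C` separates `x` and `y` within the induced subgraph `G[A]`. -/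
def SeparatesWithin (G : SimpleGraph V) (A C : Set V) (x y : V) : Prop :=
  x ∈ A \ C ∧ y ∈ A \ C ∧
    ∀ p : G.Walk x y, (∀ z ∈ p.support, z ∈ A) → ∃ z ∈ C, z ∈ p.support

/-- `G[A]` is a `c`-atom: it has no clique separator of size at most `c`. -/
def AtomWithin (G : SimpleGraph V) (c : ℕ) (A : Set V) : Prop :=
  ¬ ∃ C : Set V, C ⊆ A ∧ G.IsClique C ∧ C.ncard ≤ c ∧ ∃ x y, SeparatesWithin G A C x y

/-- `G[A]` is a maximal `c`-atom of `G`. -/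
def MaxAtom (G : SimpleGraph V) (c : ℕ) (A : Set V) : Prop :=
  AtomWithin G c A ∧ ∀ B, A ⊆ B → AtomWithin G c B → B = A

/-- The `c`-chordal completion of `G`: every maximal `c`-inseparable set is turned
into a clique. -/
def chordalComp (G : SimpleGraph V) (c : ℕ) : SimpleGraph V where
  Adj u v := u ≠ v ∧ (G.Adj u v ∨ ∃ A : Set V, MaxInsepSet G c A ∧ u ∈ A ∧ v ∈ A)
  symm := by
    constructor
    rintro u v ⟨h1, h2⟩
    refine ⟨h1.symm, ?_⟩
    rcases h2 with h | ⟨A, hA, hu, hv⟩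
    · exact Or.inl h.symm
    · exact Or.inr ⟨A, hA, hv, hu⟩
  loopless := by constructor; rintro u ⟨h, -⟩; exact h rfl


/-! For finite graphs the maximal `c`-atoms are exactly the maximal `c`-inseparable sets. An atom
is inseparable, because a small clique separating two of its vertices still separates them inside
the atom. Conversely, let `S` be maximal inseparable and let a walk between two vertices of `S`
leave `S` through a vertex `w`. By maximality some small clique `D` separates `w` from a vertex of
`S`, hence from all of `S`; the walk enters and leaves the part of `G - D` containing `w` through
`D`, and since `D` is a clique that excursion can be cut short. So every walk between vertices of
`S` can be pulled back into `S` without gaining vertices, and a clique separator of `G[S]` would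
separate in `G`.

Passing to `G^c` does not create new inseparable pairs: a new edge of `G^c` joins two vertices
that no small clique of `G` separates, so it can be replaced by a walk of `G` avoiding any such
clique. As every maximal inseparable set of `G` is a clique of `G^c`, the maximal inseparable sets
of `G` and `G^c` coincide. -/

def ReachableAvoiding (G : SimpleGraph V) (C : Set V) (x y : V) : Prop :=
  ∃ p : G.Walk x y, ∀ z ∈ p.support, z ∉ C

section Separation

variable {G : SimpleGraph V} {C : Set V} {c : ℕ} {x y z : V}

lemma ReachableAvoiding.refl (hx : x ∉ C) : ReachableAvoiding G C x x :=
  ⟨.nil, by simpa using hx⟩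

lemma ReachableAvoiding.of_adj (h : G.Adj x y) (hx : x ∉ C) (hy : y ∉ C) :
    ReachableAvoiding G C x y :=
  ⟨.cons h .nil, by simp [hx, hy]⟩

lemma ReachableAvoiding.symm (h : ReachableAvoiding G C x y) : ReachableAvoiding G C y x := by
  obtain ⟨p, hp⟩ := h
  exact ⟨p.reverse, by simpa using hp⟩

lemma ReachableAvoiding.trans (hxy : ReachableAvoiding G C x y)
    (hyz : ReachableAvoiding G C y z) : ReachableAvoiding G C x z := by
  obtain ⟨p, hp⟩ := hxy
  obtain ⟨q, hq⟩ := hyz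
  exact ⟨p.append q, fun v hv => ((p.mem_support_append_iff q).1 hv).elim (hp v) (hq v)⟩

lemma ReachableAvoiding.right_notMem (h : ReachableAvoiding G C x y) : y ∉ C := by
  obtain ⟨p, hp⟩ := h
  exact hp y p.end_mem_support

lemma separates_iff :
    Separates G C x y ↔ x ∉ C ∧ y ∉ C ∧ ¬ ReachableAvoiding G C x y := by
  simp only [Separates, ReachableAvoiding, not_exists, not_forall, not_not, exists_prop, and_comm]

lemma Separates.symm (h : Separates G C x y) : Separates G C y x := by
  obtain ⟨hx, hy, hxy⟩ := separates_iff.1 h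
  exact separates_iff.2 ⟨hy, hx, fun hyx => hxy hyx.symm⟩

lemma not_separates_self : ¬ Separates G C x x := fun h =>
  let ⟨hx, _, hxx⟩ := separates_iff.1 h
  hxx (.refl hx)

lemma CInsep.reachableAvoiding (h : CInsep G c x y) (hC : G.IsClique C) (hcard : C.ncard ≤ c)
    (hx : x ∉ C) (hy : y ∉ C) : ReachableAvoiding G C x y := by
  by_contra hxy
  exact h C hC hcard (separates_iff.2 ⟨hx, hy, hxy⟩)

lemma CInsep.of_adj (h : G.Adj x y) : CInsep G c x y := fun _ _ _ hsep =>
  let ⟨hx, hy, hxy⟩ := separates_iff.1 hsep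
  hxy (.of_adj h hx hy)

end Separation

namespace SimpleGraph.Walk

variable {G : SimpleGraph V} {K D : Set V}

lemma exists_shorter_from_boundary (hK : ∀ u v, u ∈ K → G.Adj u v → v ∈ K ∨ v ∈ D) :
    ∀ {a b : V} (r : G.Walk a b), a ∈ K → b ∉ K →
      ∃ d ∈ D, ∃ r' : G.Walk d b, r'.support ⊆ r.support ∧ r'.length < r.length
  | _, _, .nil, ha, hb => absurd ha hb
  | _, _, .cons (v := v) h r, ha, hb => by
    by_cases hv : v ∈ K
    · obtain ⟨d, hd, r', hr', hlen⟩ := exists_shorter_from_boundary hK r hv hb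
      exact ⟨d, hd, r', List.Subset.trans hr' (r.support_subset_support_cons h), by simp; omega⟩
    · exact ⟨v, (hK _ v ha h).resolve_left hv, r, r.support_subset_support_cons h, by simp⟩

lemma exists_shorter_of_mem_support [DecidableEq V] (hD : G.IsClique D)
    (hK : ∀ u v, u ∈ K → G.Adj u v → v ∈ K ∨ v ∈ D) {x y w : V} (p : G.Walk x y)
    (hw : w ∈ p.support) (hwK : w ∈ K) (hx : x ∉ K) (hy : y ∉ K) :
    ∃ q : G.Walk x y, q.support ⊆ p.support ∧ q.length < p.length := by
  have hlen : (p.takeUntil w hw).length + (p.dropUntil w hw).length = p.length := by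
    rw [← Walk.length_append, p.take_spec hw]
  obtain ⟨d₁, hd₁, r₁, hr₁, hlen₁⟩ :=
    exists_shorter_from_boundary hK (p.takeUntil w hw).reverse hwK hx
  obtain ⟨d₂, hd₂, r₂, hr₂, hlen₂⟩ := exists_shorter_from_boundary hK (p.dropUntil w hw) hwK hy
  rw [support_reverse, List.subset_reverse] at hr₁
  rw [length_reverse] at hlen₁
  have hr₁p : r₁.reverse.support ⊆ p.support := by
    rw [support_reverse, List.reverse_subset]
    exact List.Subset.trans hr₁ (p.support_takeUntil_subset_support hw)
  have hr₂p : r₂.support ⊆ p.support :=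
    List.Subset.trans hr₂ (p.support_dropUntil_subset_support hw)
  by_cases hd : d₁ = d₂
  · subst hd
    refine ⟨r₁.reverse.append r₂, ?_, by simp; omega⟩
    rw [support_append]
    exact List.append_subset.2 ⟨hr₁p, List.Subset.trans (List.tail_subset _) hr₂p⟩
  · refine ⟨r₁.reverse.append (.cons (hD hd₁ hd₂ hd) r₂), ?_, by simp; omega⟩
    rw [support_append, support_cons, List.tail_cons]
    exact List.append_subset.2 ⟨hr₁p, hr₂p⟩

end SimpleGraph.Walk

section Atoms

variable {G : SimpleGraph V} {c : ℕ} {A S : Set V}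

lemma AtomWithin.insepSet [Finite V] (h : AtomWithin G c A) : InsepSet G c A := by
  intro x hx y hy C hC hcard hsep
  obtain ⟨hxC, hyC, hxy⟩ := hsep
  exact h ⟨C ∩ A, Set.inter_subset_right, hC.subset Set.inter_subset_left,
    (Set.ncard_inter_le_ncard_left C A).trans hcard, x, y, ⟨hx, fun h' => hxC h'.1⟩,
    ⟨hy, fun h' => hyC h'.1⟩,
    fun p hp => (hxy p).imp fun z hz => ⟨⟨hz.1, hp z hz.2⟩, hz.2⟩⟩

lemma InsepSet.exists_maxInsepSet [Finite V] (hA : InsepSet G c A) :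
    ∃ S, A ⊆ S ∧ MaxInsepSet G c S := by
  obtain ⟨S, hAS, hS⟩ := (Set.toFinite {B | InsepSet G c B}).exists_le_maximal hA
  exact ⟨S, hAS, hS.prop, fun B hSB hB => (hS.eq_of_le hB hSB).symm⟩

lemma MaxInsepSet.exists_separates_of_notMem (hS : MaxInsepSet G c S) {w : V} (hw : w ∉ S) :
    ∃ D, G.IsClique D ∧ D.ncard ≤ c ∧ ∃ s ∈ S, Separates G D w s := by
  by_contra! h
  have hins : InsepSet G c (insert w S) := by
    rintro a (rfl | ha) b (rfl | hb) D hD hcard hsep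
    · exact not_separates_self hsep
    · exact h D hD hcard b hb hsep
    · exact h D hD hcard a ha hsep.symm
    · exact hS.1 a ha b hb D hD hcard hsep
  exact hw (hS.2 _ (Set.subset_insert w S) hins ▸ Set.mem_insert w S)

lemma MaxInsepSet.exists_walk_within (hS : MaxInsepSet G c S) {x y : V} (p : G.Walk x y)
    (hx : x ∈ S) (hy : y ∈ S) :
    ∃ q : G.Walk x y, q.support ⊆ p.support ∧ ∀ z ∈ q.support, z ∈ S := by
  classical
  induction hn : p.length using Nat.strong_induction_on generalizing p with
  | _ n ih =>
    by_cases hpS : ∀ z ∈ p.support, z ∈ S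
    · exact ⟨p, List.Subset.refl _, hpS⟩
    push Not at hpS
    obtain ⟨w, hwp, hwS⟩ := hpS
    obtain ⟨D, hD, hcard, s, hs, hsep⟩ := hS.exists_separates_of_notMem hwS
    set K := {v | ReachableAvoiding G D w v}
    have hSK : ∀ t ∈ S, t ∉ K := fun t ht (htK : ReachableAvoiding G D w t) =>
      (separates_iff.1 hsep).2.2 <| htK.trans <|
        (hS.1 t ht s hs).reachableAvoiding hD hcard htK.right_notMem hsep.2.1
    have hK : ∀ u v, u ∈ K → G.Adj u v → v ∈ K ∨ v ∈ D :=
      fun u v (hu : ReachableAvoiding G D w u) huv =>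
        or_iff_not_imp_right.2 fun hv => hu.trans (.of_adj huv hu.right_notMem hv)
    obtain ⟨q, hqp, hqlen⟩ :=
      p.exists_shorter_of_mem_support hD hK hwp (.refl hsep.1) (hSK x hx) (hSK y hy)
    obtain ⟨r, hrq, hrS⟩ := ih _ (hn ▸ hqlen) q rfl
    exact ⟨r, List.Subset.trans hrq hqp, hrS⟩

lemma MaxInsepSet.atomWithin (hS : MaxInsepSet G c S) : AtomWithin G c S := by
  rintro ⟨C, -, hC, hcard, x, y, ⟨hx, hxC⟩, ⟨hy, hyC⟩, hsep⟩
  obtain ⟨p, hp⟩ := (hS.1 x hx y hy).reachableAvoiding hC hcard hxC hyC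
  obtain ⟨q, hqp, hqS⟩ := hS.exists_walk_within p hx hy
  obtain ⟨z, hzC, hzq⟩ := hsep q hqS
  exact hp z (hqp hzq) hzC

lemma maxAtom_iff_maxInsepSet [Finite V] : MaxAtom G c A ↔ MaxInsepSet G c A := by
  constructor
  · rintro ⟨hA, hmax⟩
    obtain ⟨S, hAS, hS⟩ := hA.insepSet.exists_maxInsepSet
    exact hmax S hAS hS.atomWithin ▸ hS
  · intro hA
    exact ⟨hA.atomWithin, fun B hAB hB => hA.2 B hAB hB.insepSet⟩

end Atoms

section ChordalCompletion

variable {G : SimpleGraph V} {c : ℕ} {C S : Set V} {x y : V}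

lemma le_chordalComp : G ≤ chordalComp G c := fun _ _ h => ⟨h.ne, .inl h⟩

lemma ReachableAvoiding.of_chordalComp (hC : G.IsClique C) (hcard : C.ncard ≤ c)
    (h : ReachableAvoiding (chordalComp G c) C x y) : ReachableAvoiding G C x y := by
  obtain ⟨p, hp⟩ := h
  induction p with
  | nil => exact .refl (hp _ (by simp))
  | @cons u v w huv p ih =>
    have hu : u ∉ C := hp u (by simp)
    have hv : v ∉ C := hp v (by simp)
    refine ReachableAvoiding.trans ?_ (ih fun z hz => hp z (by simp [hz]))
    rcases huv.2 with h | ⟨S, hS, huS, hvS⟩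
    · exact .of_adj h hu hv
    · exact (hS.1 u huS v hvS).reachableAvoiding hC hcard hu hv

lemma CInsep.of_chordalComp (h : CInsep (chordalComp G c) c x y) : CInsep G c x y := by
  intro C hC hcard hsep
  obtain ⟨hx, hy, hxy⟩ := separates_iff.1 hsep
  exact hxy ((h.reachableAvoiding (hC.mono le_chordalComp) hcard hx hy).of_chordalComp hC hcard)

lemma InsepSet.of_chordalComp (h : InsepSet (chordalComp G c) c S) : InsepSet G c S :=
  fun u hu v hv => (h u hu v hv).of_chordalComp

lemma MaxInsepSet.insepSet_chordalComp (hS : MaxInsepSet G c S) :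
    InsepSet (chordalComp G c) c S := by
  intro u hu v hv
  by_cases huv : u = v
  · exact huv ▸ fun _ _ _ => not_separates_self
  · exact .of_adj ⟨huv, .inr ⟨S, hS, hu, hv⟩⟩

lemma maxInsepSet_chordalComp_iff [Finite V] :
    MaxInsepSet (chordalComp G c) c S ↔ MaxInsepSet G c S := by
  constructor
  · intro hS
    refine ⟨hS.1.of_chordalComp, fun B hSB hB => ?_⟩
    obtain ⟨T, hBT, hT⟩ := hB.exists_maxInsepSet
    have hTS : T = S := hS.2 T (hSB.trans hBT) hT.insepSet_chordalComp
    exact (hTS ▸ hBT).antisymm hSB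
  · intro hS
    exact ⟨hS.insepSet_chordalComp, fun B hSB hB => hS.2 B hSB hB.of_chordalComp⟩

end ChordalCompletion

/-- `G[A]` is a maximal `c`-atom of `G` iff `G^c[A]` is a maximal `c`-atom of the
`c`-chordal completion `G^c`. -/
theorem stmt4 [Fintype V] (G : SimpleGraph V) (c : ℕ) (A : Set V) :
    MaxAtom G c A ↔ MaxAtom (chordalComp G c) c A := by
  rw [maxAtom_iff_maxInsepSet, maxAtom_iff_maxInsepSet, maxInsepSet_chordalComp_iff]
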